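/- For Ω in the Siegel upper half-space H_g and any m₁, m₂ ∈ ℤ^g, the Riemann theta function ϑ(Ω,z) = Σ_{m ∈ ℤ^g} exp(πi(mΩmᵀ + 2mzᵀ)) satisfies the quasi-periodicity relation ϑ(Ω, z + m₁ + m₂Ω) = exp(-πi(m₂Ω m₂ᵀ + 2 m₂ zᵀ)) · ϑ(Ω, z). -/

import Mathlib

/-!
Substituting `z + m₁ + m₂Ω` into the exponent and completing the square with the symmetry of `Ω`
turns the `m`-th summand into `exp(-πi(m₂Ωm₂ᵀ + 2m₂zᵀ))` times the `(m + m₂)`-th summand at `z`,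
up to the factor `exp(2πi m·m₁) = 1`. Reindexing the sum over `ℤ^g` by `m ↦ m + m₂` concludes.
-/

open scoped Matrix

/-- The Riemann theta function `ϑ(Ω,z) = Σ_{m ∈ ℤ^g} exp(πi(mΩmᵀ + 2mzᵀ))`. -/
noncomputable def riemannTheta {g : ℕ} (Ω : Matrix (Fin g) (Fin g) ℂ)
    (z : Fin g → ℂ) : ℂ :=
  ∑' m : Fin g → ℤ,
    Complex.exp (Real.pi * Complex.I *
      (dotProduct (fun i => (m i : ℂ)) (Ω.mulVec fun i => (m i : ℂ)) +
        2 * dotProduct (fun i => (m i : ℂ)) z))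

open Complex

namespace Matrix.IsSymm

variable {ι R : Type*} [Fintype ι] [CommRing R] {Ω : Matrix ι ι R}

theorem vecMul_eq_mulVec (hΩ : Ω.IsSymm) (x : ι → R) : x ᵥ* Ω = Ω *ᵥ x := by
  rw [← mulVec_transpose, hΩ.eq]

theorem dotProduct_mulVec_comm (hΩ : Ω.IsSymm) (x y : ι → R) :
    x ⬝ᵥ Ω *ᵥ y = y ⬝ᵥ Ω *ᵥ x := by
  rw [dotProduct_mulVec, hΩ.vecMul_eq_mulVec, dotProduct_comm]

theorem quadratic_exponent_shift (hΩ : Ω.IsSymm) (n a b z : ι → R) :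
    n ⬝ᵥ Ω *ᵥ n + 2 * n ⬝ᵥ (z + a + Ω *ᵥ b) =
      ((n + b) ⬝ᵥ Ω *ᵥ (n + b) + 2 * (n + b) ⬝ᵥ z) - (b ⬝ᵥ Ω *ᵥ b + 2 * b ⬝ᵥ z) +
        2 * n ⬝ᵥ a := by
  simp only [mulVec_add, dotProduct_add, add_dotProduct, hΩ.dotProduct_mulVec_comm b n]
  ring

end Matrix.IsSymm

theorem Complex.exp_pi_mul_I_mul_add_two_mul_intCast (x : ℂ) (k : ℤ) :
    cexp (Real.pi * I * (x + 2 * k)) = cexp (Real.pi * I * x) := by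
  rw [mul_add, Complex.exp_add, show (Real.pi * I * (2 * k) : ℂ) = k * (2 * Real.pi * I) by ring,
    Complex.exp_int_mul_two_pi_mul_I, mul_one]

noncomputable def riemannThetaTerm {g : ℕ} (Ω : Matrix (Fin g) (Fin g) ℂ) (z : Fin g → ℂ)
    (m : Fin g → ℤ) : ℂ :=
  cexp (Real.pi * I * ((Int.cast ∘ m) ⬝ᵥ Ω *ᵥ (Int.cast ∘ m) + 2 * (Int.cast ∘ m) ⬝ᵥ z))

theorem riemannTheta_eq_tsum_riemannThetaTerm {g : ℕ} (Ω : Matrix (Fin g) (Fin g) ℂ)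
    (z : Fin g → ℂ) : riemannTheta Ω z = ∑' m, riemannThetaTerm Ω z m := rfl

theorem riemannThetaTerm_shift {g : ℕ} {Ω : Matrix (Fin g) (Fin g) ℂ} (hΩ : Ω.IsSymm)
    (z : Fin g → ℂ) (m₁ m₂ m : Fin g → ℤ) :
    riemannThetaTerm Ω (z + Int.cast ∘ m₁ + Ω *ᵥ (Int.cast ∘ m₂)) m =
      cexp (-(Real.pi * I) * ((Int.cast ∘ m₂) ⬝ᵥ Ω *ᵥ (Int.cast ∘ m₂) +
        2 * (Int.cast ∘ m₂) ⬝ᵥ z)) * riemannThetaTerm Ω z (m + m₂) := by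
  have hcast : (Int.cast ∘ (m + m₂) : Fin g → ℂ) = Int.cast ∘ m + Int.cast ∘ m₂ := by
    ext i; simp
  have hlin : (Int.cast ∘ m : Fin g → ℂ) ⬝ᵥ (Int.cast ∘ m₁) = ((m ⬝ᵥ m₁ : ℤ) : ℂ) :=
    ((Int.castRingHom ℂ).map_dotProduct m m₁).symm
  rw [riemannThetaTerm, hΩ.quadratic_exponent_shift, hlin,
    Complex.exp_pi_mul_I_mul_add_two_mul_intCast, riemannThetaTerm, hcast, ← Complex.exp_add]
  congr 1
  ring

theorem riemannTheta_quasi_periodic_general {g : ℕ} (Ω : Matrix (Fin g) (Fin g) ℂ)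
    (hsymm : Ω.IsSymm)
    (m₁ m₂ : Fin g → ℤ) (z : Fin g → ℂ) :
    riemannTheta Ω
        (fun i => z i + (m₁ i : ℂ) + Matrix.vecMul (fun j => (m₂ j : ℂ)) Ω i) =
      Complex.exp (-(Real.pi * Complex.I) *
          (dotProduct (fun i => (m₂ i : ℂ))
              (Ω.mulVec fun i => (m₂ i : ℂ)) +
            2 * dotProduct (fun i => (m₂ i : ℂ)) z)) *
        riemannTheta Ω z := by
  have hshift : (fun i => z i + (m₁ i : ℂ) + Matrix.vecMul (fun j => (m₂ j : ℂ)) Ω i) =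
      z + Int.cast ∘ m₁ + Ω *ᵥ (Int.cast ∘ m₂) := by
    rw [← hsymm.vecMul_eq_mulVec]
    rfl
  rw [hshift, riemannTheta_eq_tsum_riemannThetaTerm, riemannTheta_eq_tsum_riemannThetaTerm,
    ← (Equiv.addRight m₂).tsum_eq (riemannThetaTerm Ω z), ← tsum_mul_left]
  exact tsum_congr (riemannThetaTerm_shift hsymm z m₁ m₂)

/-- Quasi-periodicity of the Riemann theta function: for `Ω` in the Siegel upper
half-space and `m₁, m₂ ∈ ℤ^g`,
`ϑ(Ω, z + m₁ + m₂Ω) = exp(-πi(m₂Ω m₂ᵀ + 2 m₂ zᵀ)) · ϑ(Ω, z)`. -/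
theorem riemannTheta_quasi_periodic {g : ℕ} (Ω : Matrix (Fin g) (Fin g) ℂ)
    (hsymm : Ω.IsSymm) (hpos : (Ω.map Complex.im).PosDef)
    (m₁ m₂ : Fin g → ℤ) (z : Fin g → ℂ) :
    riemannTheta Ω
        (fun i => z i + (m₁ i : ℂ) + Matrix.vecMul (fun j => (m₂ j : ℂ)) Ω i) =
      Complex.exp (-(Real.pi * Complex.I) *
          (dotProduct (fun i => (m₂ i : ℂ))
              (Ω.mulVec fun i => (m₂ i : ℂ)) +
            2 * dotProduct (fun i => (m₂ i : ℂ)) z)) *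
        riemannTheta Ω z :=
  riemannTheta_quasi_periodic_general Ω hsymm m₁ m₂ z
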